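/- Let X be a separable metrizable space such that the set S(X) of non-isolated points of X is compact. Then the hyperspace CL(X) with the Vietoris topology is a γ-space: there is a function g : ℕ × CL(X) → (opens of CL(X)) such that (i) {g(n, A) : n ∈ ℕ} is a neighborhood base at A for each A ∈ CL(X), and (ii) for each n and A there is m with: B ∈ g(m, A) implies g(m, B) ⊆ g(n, A). -/

import Mathlib

open Set TopologicalSpace

/-- The hyperspace of nonempty closed subsets of `X`. -/
def CL (X : Type*) [TopologicalSpace X] : Type _ :=
  {A : Set X // A.Nonempty ∧ IsClosed A}

/-- The Vietoris topology on `CL X`. -/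
instance CL.instTopologicalSpace (X : Type*) [TopologicalSpace X] :
    TopologicalSpace (CL X) :=
  .generateFrom
    ({S | ∃ U : Set X, IsOpen U ∧ S = {K : CL X | K.1 ⊆ U}} ∪
     {S | ∃ U : Set X, IsOpen U ∧ S = {K : CL X | (K.1 ∩ U).Nonempty}})

/-!
Fix a compatible totally bounded metric on `X` (embed `X` into the Hilbert cube). At scale `ε`,
a closed set `A` with a finite `ε`-net `t` gets the Vietoris neighbourhood of those `B` that lie in
the `ε`-thickening of the non-isolated part `A ∩ S(X)` together with the isolated points of `A`,
and that come `ε`-close to every point of `t`. Compactness of `A ∩ S(X)` makes these neighbourhoods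
shrink into every upper Vietoris set `{K | K ⊆ U}` around `A`, finiteness of `t` makes them open,
and both conditions satisfy a triangle inequality in `ε`, so passing to scale `ε / 4` yields the
`γ`-condition.
-/

open Metric Filter Topology

structure IsGammaGFunction {Y : Type*} [TopologicalSpace Y] (g : ℕ → Y → Set Y) : Prop where
  isOpen : ∀ n y, IsOpen (g n y)
  mem : ∀ n y, y ∈ g n y
  exists_subset : ∀ y S, IsOpen S → y ∈ S → ∃ n, g n y ⊆ S
  exists_subset_of_mem : ∀ n y, ∃ m, ∀ z ∈ g m y, g m z ⊆ g n y

section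

variable {X : Type*}

def nonIsolatedPoints (X : Type*) [TopologicalSpace X] : Set X := {x | ¬IsOpen ({x} : Set X)}

lemma isOpen_diff_nonIsolatedPoints [TopologicalSpace X] (A : Set X) :
    IsOpen (A \ nonIsolatedPoints X) := by
  rw [← biUnion_of_singleton (A \ nonIsolatedPoints X)]
  exact isOpen_biUnion fun _ hx => not_not.1 hx.2

namespace CL

variable [TopologicalSpace X]

lemma isOpen_setOf_subset {U : Set X} (hU : IsOpen U) : IsOpen {K : CL X | K.1 ⊆ U} :=
  .basic _ (.inl ⟨U, hU, rfl⟩)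

lemma isOpen_setOf_inter_nonempty {U : Set X} (hU : IsOpen U) :
    IsOpen {K : CL X | (K.1 ∩ U).Nonempty} :=
  .basic _ (.inr ⟨U, hU, rfl⟩)

lemma exists_subset_of_directed {A : CL X} {V : ℕ → Set (CL X)} (hV : Directed (· ⊇ ·) V)
    (h_upper : ∀ U, IsOpen U → A.1 ⊆ U → ∃ n, V n ⊆ {K | K.1 ⊆ U})
    (h_lower : ∀ U, IsOpen U → (A.1 ∩ U).Nonempty → ∃ n, V n ⊆ {K | (K.1 ∩ U).Nonempty})
    {S : Set (CL X)} (hS : IsOpen S) (hA : A ∈ S) : ∃ n, V n ⊆ S := by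
  have hle : ⨅ n, 𝓟 (V n) ≤ 𝓝 A := by
    rw [show 𝓝 A = _ from nhds_generateFrom]
    refine le_iInf₂ fun s ⟨hAs, hs⟩ => ?_
    obtain ⟨n, hn⟩ : ∃ n, V n ⊆ s := by
      rcases hs with ⟨U, hU, rfl⟩ | ⟨U, hU, rfl⟩
      exacts [h_upper U hU hAs, h_lower U hU hAs]
    exact iInf_le_of_le n (principal_mono.2 hn)
  have hdir : Directed (· ≥ ·) (𝓟 ∘ V) :=
    hV.mono_comp (fun s t : Set (CL X) => s ⊇ t) fun _ _ => principal_mono.2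
  simpa using (mem_iInf_of_directed hdir S).1 (hle (hS.mem_nhds hA))

end CL

section PseudoMetric

variable [PseudoMetricSpace X] {A B t : Set X} {δ ε : ℝ}

/-- Isolated points of `A` need no room around them, so only the non-isolated part is thickened. -/
def upperNbhd (ε : ℝ) (A : Set X) : Set X :=
  thickening ε (A ∩ nonIsolatedPoints X) ∪ (A \ nonIsolatedPoints X)

lemma isOpen_upperNbhd : IsOpen (upperNbhd ε A) :=
  isOpen_thickening.union (isOpen_diff_nonIsolatedPoints A)

lemma subset_upperNbhd (hε : 0 < ε) : A ⊆ upperNbhd ε A := fun x hx => by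
  by_cases hxS : x ∈ nonIsolatedPoints X
  · exact .inl (self_subset_thickening hε _ ⟨hx, hxS⟩)
  · exact .inr ⟨hx, hxS⟩

lemma upperNbhd_mono (h : δ ≤ ε) : upperNbhd δ A ⊆ upperNbhd ε A :=
  union_subset_union_left _ (thickening_mono h _)

lemma upperNbhd_subset_upperNbhd_add (hδ : 0 ≤ δ) (hB : B ⊆ upperNbhd ε A) :
    upperNbhd δ B ⊆ upperNbhd (δ + ε) A := by
  refine union_subset ?_ fun x hx => upperNbhd_mono (le_add_of_nonneg_left hδ) (hB hx.1)
  have hBS : B ∩ nonIsolatedPoints X ⊆ thickening ε (A ∩ nonIsolatedPoints X) :=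
    fun x ⟨hxB, hxS⟩ => (hB hxB).resolve_right fun hx => hx.2 hxS
  exact ((thickening_subset_of_subset δ hBS).trans (thickening_thickening_subset _ _ _)).trans
    subset_union_left

lemma IsCompact.exists_upperNbhd_subset (hS : IsCompact (nonIsolatedPoints X)) (hA : IsClosed A)
    {U : Set X} (hU : IsOpen U) (hAU : A ⊆ U) : ∃ δ, 0 < δ ∧ upperNbhd δ A ⊆ U := by
  obtain ⟨δ, hδ, hδU⟩ := (hS.inter_left hA).exists_thickening_subset_open hU
    (inter_subset_left.trans hAU)
  exact ⟨δ, hδ, union_subset hδU (sdiff_subset.trans hAU)⟩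

namespace CL

def vietorisNbhd (ε : ℝ) (A t : Set X) : Set (CL X) :=
  {B | B.1 ⊆ upperNbhd ε A ∧ t ⊆ thickening ε B.1}

lemma isOpen_setOf_mem_thickening (x : X) (ε : ℝ) : IsOpen {B : CL X | x ∈ thickening ε B.1} := by
  convert isOpen_setOf_inter_nonempty (X := X) (isOpen_ball (x := x) (ε := ε)) using 3 with B
  simp [mem_thickening_iff, Set.Nonempty, dist_comm, and_comm]

lemma isOpen_vietorisNbhd (ht : t.Finite) : IsOpen (vietorisNbhd ε A t) := by
  have : vietorisNbhd ε A t =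
      {B : CL X | B.1 ⊆ upperNbhd ε A} ∩ ⋂ x ∈ t, {B | x ∈ thickening ε B.1} := by
    ext B; simp [vietorisNbhd, subset_def]
  rw [this]
  exact (isOpen_setOf_subset isOpen_upperNbhd).inter
    (ht.isOpen_biInter fun x _ => isOpen_setOf_mem_thickening x ε)

lemma self_mem_vietorisNbhd (hε : 0 < ε) {A : CL X} (ht : t ⊆ A.1) : A ∈ vietorisNbhd ε A.1 t :=
  ⟨subset_upperNbhd hε, ht.trans (self_subset_thickening hε _)⟩

lemma subset_thickening_of_mem_vietorisNbhd {t' : Set X} (hAt' : A ⊆ thickening δ t')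
    {B : CL X} (hB : B ∈ vietorisNbhd δ A t') : A ⊆ thickening (δ + δ) B.1 :=
  (hAt'.trans (thickening_subset_of_subset δ hB.2)).trans (thickening_thickening_subset _ _ _)

lemma vietorisNbhd_subset {t' : Set X} (hδ : 0 ≤ δ) (hε : δ + δ ≤ ε) (ht : t ⊆ A)
    (hAt' : A ⊆ thickening δ t') : vietorisNbhd δ A t' ⊆ vietorisNbhd ε A t := fun B hB =>
  ⟨hB.1.trans (upperNbhd_mono (by linarith)),
    (ht.trans (subset_thickening_of_mem_vietorisNbhd hAt' hB)).trans (thickening_mono hε _)⟩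

lemma vietorisNbhd_subset_of_mem {t' s : Set X} (hδ : 0 ≤ δ) (hε : δ + δ + (δ + δ) ≤ ε)
    (ht : t ⊆ A) (hAt' : A ⊆ thickening δ t') {B : CL X} (hBs : B.1 ⊆ thickening δ s)
    (hB : B ∈ vietorisNbhd δ A t') : vietorisNbhd δ B.1 s ⊆ vietorisNbhd ε A t := fun C hC =>
  ⟨hC.1.trans <| (upperNbhd_subset_upperNbhd_add hδ hB.1).trans (upperNbhd_mono (by linarith)),
    (ht.trans <| (subset_thickening_of_mem_vietorisNbhd hAt' hB).trans <|
      (thickening_subset_of_subset _ (subset_thickening_of_mem_vietorisNbhd hBs hC)).trans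
        (thickening_thickening_subset _ _ _)).trans (thickening_mono hε _)⟩

end CL

end PseudoMetric

theorem CL.exists_isGammaGFunction [PseudoMetricSpace X] (htb : TotallyBounded (univ : Set X))
    (hS : IsCompact (nonIsolatedPoints X)) : ∃ g : ℕ → CL X → Set (CL X), IsGammaGFunction g := by
  set r : ℕ → ℝ := fun n => 2⁻¹ ^ n
  have hr : ∀ n, 0 < r n := fun n => by positivity
  have hr_succ : ∀ n, r (n + 1) + r (n + 1) = r n := fun n => by simp only [r, pow_succ]; ring
  have hr_anti : Antitone r := fun m n h => pow_le_pow_of_le_one (by norm_num) (by norm_num) h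
  have hr_small : ∀ ε > 0, ∃ n, r n < ε := fun ε hε => exists_pow_lt_of_lt_one hε (by norm_num)
  choose net hnet_sub hnet_fin hnet_cover using fun (n : ℕ) (A : CL X) =>
    finite_approx_of_totallyBounded (htb.subset (subset_univ A.1)) (r n) (hr n)
  simp only [← thickening_eq_biUnion_ball] at hnet_cover
  have hmono : ∀ A {m n}, n < m →
      CL.vietorisNbhd (r m) A.1 (net m A) ⊆ CL.vietorisNbhd (r n) A.1 (net n A) :=
    fun A m n hnm => CL.vietorisNbhd_subset (hr m).le
      ((add_le_add (hr_anti hnm) (hr_anti hnm)).trans (hr_succ n).le) (hnet_sub n A)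
      (hnet_cover m A)
  refine ⟨fun n A => CL.vietorisNbhd (r n) A.1 (net n A),
    ⟨fun n A => ?_, fun n A => ?_, fun A T hT hA => ?_, fun n A => ⟨n + 2, fun B hB => ?_⟩⟩⟩
  · exact CL.isOpen_vietorisNbhd (hnet_fin n A)
  · exact CL.self_mem_vietorisNbhd (hr n) (hnet_sub n A)
  · refine CL.exists_subset_of_directed ?_ (fun U hU hAU => ?_) (fun U hU hAU => ?_) hT hA
    · exact fun i j => ⟨max i j + 1, hmono A (by omega), hmono A (by omega)⟩
    · obtain ⟨δ, hδ, hδU⟩ := hS.exists_upperNbhd_subset A.2.2 hU hAU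
      obtain ⟨n, hn⟩ := hr_small δ hδ
      exact ⟨n, fun B hB => hB.1.trans ((upperNbhd_mono hn.le).trans hδU)⟩
    · obtain ⟨x, hxA, hxU⟩ := hAU
      obtain ⟨ε, hε, hεU⟩ := Metric.isOpen_iff.1 hU x hxU
      obtain ⟨n, hn⟩ := hr_small ε hε
      refine ⟨n + 1, fun B hB => ?_⟩
      obtain ⟨y, hyB, hxy⟩ := mem_thickening_iff.1
        (CL.subset_thickening_of_mem_vietorisNbhd (hnet_cover _ A) hB hxA)
      exact ⟨y, hyB, hεU (mem_ball'.2 (hxy.trans ((hr_succ n).trans_lt hn)))⟩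
  · refine CL.vietorisNbhd_subset_of_mem (hr _).le ?_ (hnet_sub n A) (hnet_cover _ A)
      (hnet_cover _ B) hB
    rw [hr_succ (n + 1), hr_succ n]

end

theorem exists_metricSpace_totallyBounded (X : Type*) [t : TopologicalSpace X] [SeparableSpace X]
    [MetrizableSpace X] :
    ∃ m : MetricSpace X, m.toUniformSpace.toTopologicalSpace = t ∧
      @TotallyBounded X m.toUniformSpace univ := by
  let := metrizableSpaceMetric X
  obtain ⟨F, hF⟩ := PiNatEmbed.exists_embedding_to_hilbert_cube (X := X)
  let : MetricSpace (ℕ → unitInterval) := PiCountable.metricSpace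
  let m : MetricSpace X := hF.comapMetricSpace F
  have hF_isometry : Isometry F := .of_dist_eq fun _ _ => rfl
  refine ⟨m, rfl, ?_⟩
  simpa using totallyBounded_preimage hF_isometry.isUniformInducing isCompact_univ.totallyBounded

/-- If `X` is a separable metrizable space whose set of non-isolated points is
compact, then the Vietoris hyperspace `CL X` is a `γ`-space: it admits a
`g`-function `g : ℕ × CL X → opens` such that `{g n A : n}` is a neighborhood
base at each `A`, and for all `n, A` there is `m` with `B ∈ g m A` implying
`g m B ⊆ g n A`. -/
theorem hyperspace_gamma_space_of_separable_metrizable {X : Type*}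
    [TopologicalSpace X] [SeparableSpace X] [MetrizableSpace X]
    (hS : IsCompact {x : X | ¬IsOpen ({x} : Set X)}) :
    ∃ g : ℕ → CL X → Set (CL X),
      (∀ (n : ℕ) (A : CL X), IsOpen (g n A) ∧ A ∈ g n A) ∧
      (∀ (A : CL X) (S : Set (CL X)), IsOpen S → A ∈ S → ∃ n, g n A ⊆ S) ∧
      ∀ (n : ℕ) (A : CL X), ∃ m, ∀ B ∈ g m A, g m B ⊆ g n A := by
  obtain ⟨m, rfl, htb⟩ := exists_metricSpace_totallyBounded X
  obtain ⟨g, hg⟩ := CL.exists_isGammaGFunction htb hS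
  exact ⟨g, fun n A => ⟨hg.isOpen n A, hg.mem n A⟩, hg.exists_subset, hg.exists_subset_of_mem⟩
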